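/- Let (N, K, v) be an incomplete cooperative game with K intersection-closed and N ∈ K. Then the UD-value is efficient and additive: Σ_{i ∈ N} Φ_i^K(v) = v(N), and for any two incomplete games (N, K, v), (N, K, w) on the same system, Φ^K(v + w) = Φ^K(v) + Φ^K(w). -/
import Mathlib


open Finset

variable {α : Type*} [Fintype α] [DecidableEq α]

/-- A set system is intersection-closed if it is closed under pairwise intersections. -/
def InterClosed (K : Finset (Finset α)) : Prop :=
  ∀ S ∈ K, ∀ T ∈ K, S ∩ T ∈ K

/-- The closure `c_K(T) = ⋂ {S ∈ K : T ⊆ S}` of a coalition `T` in the set system `K`. -/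
def cl (K : Finset (Finset α)) (T : Finset α) : Finset α :=
  (K.filter fun S => T ⊆ S).inf id

/-- The family `C(T)` of coalitions indistinguishable from `T`. -/
def classOf (K : Finset (Finset α)) (T : Finset α) : Finset (Finset α) :=
  Finset.univ.filter fun X => cl K X = cl K T

/-- The Harsanyi dividend `d_w(S) = w S - ∑_{T ⊊ S} d_w(T)`. -/
noncomputable def dividend (w : Finset α → ℝ) (S : Finset α) : ℝ :=
  w S - ∑ T ∈ (S.powerset.erase S).attach, dividend w T.1
termination_by S.card
decreasing_by
  have h := T.2
  simp only [mem_erase, mem_powerset] at h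
  exact Finset.card_lt_card (h.2.ssubset_of_ne h.1)

/-- The surplus `Δ_v(S) = v S - ∑_{T ∈ K, T ⊊ S} Δ_v(T)` for `S ∈ K`. -/
noncomputable def Delta (K : Finset (Finset α)) (v : Finset α → ℝ) (S : Finset α) : ℝ :=
  v S - ∑ T ∈ (K.filter fun T => T ⊂ S).attach, Delta K v T.1
termination_by S.card
decreasing_by
  have h := T.2
  simp only [mem_filter] at h
  exact Finset.card_lt_card h.2

/-- A δ-system for the incomplete game `(N, K, v)`. -/
def IsDeltaSystem (K : Finset (Finset α)) (v δ : Finset α → ℝ) : Prop :=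
  (∀ S ∈ K, ∑ T ∈ S.powerset, δ T = v S) ∧
  ∀ S T : Finset α, cl K S = cl K T → δ S = δ T

/-- The payoff `Φ_i = ∑_{S ∋ i} δ(S)/|S|` computed from a dividend function `δ`. -/
noncomputable def UDofDelta (δ : Finset α → ℝ) (i : α) : ℝ :=
  ∑ S ∈ Finset.univ.filter (fun S => i ∈ S), δ S / S.card

/-- The complete game whose Harsanyi dividends are `δ`. -/
def gameOf (δ : Finset α → ℝ) (S : Finset α) : ℝ := ∑ T ∈ S.powerset, δ T

/-- A P-extension: a positive cooperative game agreeing with `v` on `K`. -/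
def PExtension (K : Finset (Finset α)) (v w : Finset α → ℝ) : Prop :=
  w ∅ = 0 ∧ (∀ S, 0 ≤ dividend w S) ∧ ∀ S ∈ K, w S = v S

/-- P-extendability of an incomplete game. -/
def PExtendable (K : Finset (Finset α)) (v : Finset α → ℝ) : Prop :=
  ∃ w, PExtension K v w

/-- The Shapley value `φ_i(w) = ∑_{S ∋ i} d_w(S)/|S|`. -/
noncomputable def shapley (w : Finset α → ℝ) (i : α) : ℝ :=
  ∑ S ∈ Finset.univ.filter (fun S => i ∈ S), dividend w S / S.card

lemma subset_cl (K : Finset (Finset α)) (T : Finset α) : T ⊆ cl K T := by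
  show T ≤ (K.filter fun S => T ⊆ S).inf id
  exact Finset.le_inf fun S hS => (mem_filter.1 hS).2

lemma cl_subset (K : Finset (Finset α)) {S T : Finset α} (hS : S ∈ K) (hTS : T ⊆ S) :
    cl K T ⊆ S := by
  show (K.filter fun X => T ⊆ X).inf id ≤ S
  exact Finset.inf_le (mem_filter.2 ⟨hS, hTS⟩)

lemma cl_self (K : Finset (Finset α)) {S : Finset α} (hS : S ∈ K) : cl K S = S :=
  subset_antisymm (cl_subset K hS Subset.rfl) (subset_cl K S)

lemma cl_mem (K : Finset (Finset α)) (hIC : InterClosed K)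
    (hN : (Finset.univ : Finset α) ∈ K) (T : Finset α) : cl K T ∈ K := by
  have hne : (K.filter fun S => T ⊆ S).Nonempty :=
    ⟨Finset.univ, mem_filter.2 ⟨hN, subset_univ T⟩⟩
  rw [cl, ← Finset.inf'_eq_inf hne]
  exact Finset.inf'_mem (↑K : Set (Finset α))
    (fun x hx y hy => hIC x hx y hy) _ hne id (fun i hi => (mem_filter.1 hi).1)

lemma delta_unique (K : Finset (Finset α)) (hIC : InterClosed K)
    (hN : (Finset.univ : Finset α) ∈ K) (v δ1 δ2 : Finset α → ℝ)
    (h1 : IsDeltaSystem K v δ1) (h2 : IsDeltaSystem K v δ2) : δ1 = δ2 := by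
  have key : ∀ n : ℕ, ∀ S ∈ K, S.card = n → δ1 S = δ2 S := by
    intro n
    induction n using Nat.strong_induction_on with
    | _ n IH =>
      intro S hS hcard
      have hQ : ∀ T ∈ S.powerset.filter (fun T => ¬ cl K T = S), δ1 T = δ2 T := by
        intro T hT
        rw [mem_filter, mem_powerset] at hT
        have hclK : cl K T ∈ K := cl_mem K hIC hN T
        have hsub : cl K T ⊆ S := cl_subset K hS hT.1
        have hlt : (cl K T).card < n := by
          rw [← hcard]
          exact Finset.card_lt_card (hsub.ssubset_of_ne hT.2)
        have e1 : δ1 T = δ1 (cl K T) := h1.2 T (cl K T) (cl_self K hclK).symm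
        have e2 : δ2 T = δ2 (cl K T) := h2.2 T (cl K T) (cl_self K hclK).symm
        rw [e1, e2, IH _ hlt _ hclK rfl]
      have hP1 : ∀ T ∈ S.powerset.filter (fun T => cl K T = S), δ1 T = δ1 S := by
        intro T hT
        exact h1.2 T S (by rw [(mem_filter.1 hT).2, cl_self K hS])
      have hP2 : ∀ T ∈ S.powerset.filter (fun T => cl K T = S), δ2 T = δ2 S := by
        intro T hT
        exact h2.2 T S (by rw [(mem_filter.1 hT).2, cl_self K hS])
      have hsplit1 := Finset.sum_filter_add_sum_filter_not S.powerset
        (fun T => cl K T = S) δ1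
      have hsplit2 := Finset.sum_filter_add_sum_filter_not S.powerset
        (fun T => cl K T = S) δ2
      rw [h1.1 S hS] at hsplit1
      rw [h2.1 S hS] at hsplit2
      rw [Finset.sum_congr rfl hP1, Finset.sum_const] at hsplit1
      rw [Finset.sum_congr rfl hP2, Finset.sum_const] at hsplit2
      rw [Finset.sum_congr rfl hQ] at hsplit1
      have hm : S ∈ S.powerset.filter (fun T => cl K T = S) :=
        mem_filter.2 ⟨mem_powerset_self S, cl_self K hS⟩
      have hmpos : (0 : ℝ) < (S.powerset.filter (fun T => cl K T = S)).card := by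
        exact_mod_cast Finset.card_pos.2 ⟨S, hm⟩
      have := hsplit1.trans hsplit2.symm
      simp only [nsmul_eq_mul, add_left_inj] at this
      exact mul_left_cancel₀ (ne_of_gt hmpos) this
  funext T
  have hclK : cl K T ∈ K := cl_mem K hIC hN T
  rw [h1.2 T (cl K T) (cl_self K hclK).symm, h2.2 T (cl K T) (cl_self K hclK).symm,
    key _ _ hclK rfl]

lemma ud_eff (K : Finset (Finset α)) (hempty : ∅ ∈ K)
    (hN : (Finset.univ : Finset α) ∈ K) (v δ : Finset α → ℝ) (hv : v ∅ = 0)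
    (hδ : IsDeltaSystem K v δ) : ∑ i : α, UDofDelta δ i = v Finset.univ := by
  have h0 : δ ∅ = 0 := by
    have := hδ.1 ∅ hempty
    simpa [hv] using this
  have hU := hδ.1 Finset.univ hN
  rw [Finset.powerset_univ] at hU
  calc ∑ i : α, UDofDelta δ i
      = ∑ i : α, ∑ S : Finset α, if i ∈ S then δ S / S.card else 0 := by
        simp [UDofDelta, Finset.sum_filter]
    _ = ∑ S : Finset α, ∑ i : α, if i ∈ S then δ S / S.card else 0 := Finset.sum_comm
    _ = ∑ S : Finset α, δ S := by
        refine Finset.sum_congr rfl fun S _ => ?_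
        rcases eq_or_ne S ∅ with rfl | hSne
        · simp [h0]
        · have hc : (S.card : ℝ) ≠ 0 := by
            exact_mod_cast Finset.card_ne_zero.2 (nonempty_iff_ne_empty.2 hSne)
          rw [Finset.sum_ite_mem, Finset.univ_inter, Finset.sum_const, nsmul_eq_mul,
            mul_div_cancel₀ _ hc]
    _ = v Finset.univ := hU

/-- the UD-value is efficient and additive. -/
theorem ud_efficient_additive (K : Finset (Finset α))
    (hIC : InterClosed K) (hempty : ∅ ∈ K) (hN : (Finset.univ : Finset α) ∈ K) :
    (∀ v δ : Finset α → ℝ, v ∅ = 0 → IsDeltaSystem K v δ →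
      ∑ i : α, UDofDelta δ i = v Finset.univ) ∧
    ∀ v w δv δw δvw : Finset α → ℝ, v ∅ = 0 → w ∅ = 0 →
      IsDeltaSystem K v δv → IsDeltaSystem K w δw → IsDeltaSystem K (v + w) δvw →
      ∀ i : α, UDofDelta δvw i = UDofDelta δv i + UDofDelta δw i := by
  refine ⟨fun v δ hv hδ => ud_eff K hempty hN v δ hv hδ, ?_⟩
  intro v w δv δw δvw hv hw hδv hδw hδvw i
  have hsum : IsDeltaSystem K (v + w) (δv + δw) := by
    constructor
    · intro S hS
      simp only [Pi.add_apply, Finset.sum_add_distrib, hδv.1 S hS, hδw.1 S hS]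
    · intro S T h
      simp only [Pi.add_apply, hδv.2 S T h, hδw.2 S T h]
  have heq : δvw = δv + δw := delta_unique K hIC hN (v + w) δvw (δv + δw) hδvw hsum
  simp [heq, UDofDelta, Finset.sum_add_distrib, add_div]
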